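/- Let Π be a CNF theory and Π⁺ its positive form (with fresh atom φ). If φ belongs to the unique minimal model of Π⁺ containing all atoms, i.e., if every minimal model of Π⁺ contains φ, then Π is inconsistent (has no model); otherwise the sets of minimal models of Π and Π⁺ coincide. -/

import Mathlib

structure Clause where
  head : Finset ℕ
  body : Finset ℕ
deriving DecidableEq

abbrev Theory := Finset Clause

/-- interpretation I satisfies clause c -/
def satC (I : Finset ℕ) (c : Clause) : Prop :=
  (c.head ∩ I).Nonempty ∨ ¬ c.body ⊆ I

def isModel (T : Theory) (I : Finset ℕ) : Prop := ∀ c ∈ T, satC I c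

def isMinModel (T : Theory) (I : Finset ℕ) : Prop :=
  isModel T I ∧ ∀ J ⊂ I, ¬ isModel T J

def Positive (T : Theory) : Prop := ∀ c ∈ T, c.head.Nonempty

def Horn (T : Theory) : Prop := ∀ c ∈ T, c.head.card = 1

/-- atoms occurring in a theory -/
def atoms (T : Theory) : Finset ℕ := T.biUnion (fun c => c.head ∪ c.body)

/-- c_{X←} : project head on X -/
def projHeadC (c : Clause) (X : Finset ℕ) : Clause := ⟨c.head ∩ X, c.body⟩
/-- c_X : project head and body on X -/
def projC (c : Clause) (X : Finset ℕ) : Clause := ⟨c.head ∩ X, c.body ∩ X⟩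

/-- Π_{X←} -/
def projHeadT (T : Theory) (X : Finset ℕ) : Theory :=
  (T.image (fun c => projHeadC c X)).filter (fun c => c.head.Nonempty)

/-- Π_X -/
def projT (T : Theory) (X : Finset ℕ) : Theory :=
  (T.image (fun c => projC c X)).filter (fun c => c.head.Nonempty)

/-- Π^{nd} : single-head fragment -/
def nd (T : Theory) : Theory := T.filter (fun c => c.head.card = 1)

/-- the steady set of M for Π is the minimal model of Π^{nd}_{M←} -/
def isSteady (T : Theory) (M S : Finset ℕ) : Prop :=
  isMinModel (nd (projHeadT T M)) S

def simpl (T : Theory) (M S : Finset ℕ) : Theory :=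
  T.filter (fun c => c.head ∩ S = ∅ ∧ c.body ⊆ M)

/-- simplified theory of Π w.r.t. M (with steady set S) -/
def simplT (T : Theory) (M S : Finset ℕ) : Theory := projT (simpl T M S) (M \ S)

/-- E erasable in M for T -/
def Erasable (T : Theory) (M E : Finset ℕ) : Prop :=
  E.Nonempty ∧ E ⊆ M ∧ isModel T (M \ E)

def Outbound (T : Theory) (Y Z : Finset ℕ) : Prop :=
  ∃ c ∈ T, (c.head ∩ Z).Nonempty ∧ (c.body ∩ (Y \ Z)).Nonempty ∧
    c.body ∩ Z = ∅ ∧ c.head ∩ (Y \ Z) = ∅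

def Elementary (T : Theory) (Y : Finset ℕ) : Prop :=
  Y.Nonempty ∧ Y ⊆ atoms T ∧ ∀ Z, Z ⊂ Y → Z.Nonempty → Outbound T Y Z

def HEF (T : Theory) : Prop :=
  ∀ c ∈ T, ∀ E, Elementary T E → (E ∩ c.head).card ≤ 1

def DisjunctiveSet (T : Theory) (S : Finset ℕ) : Prop :=
  ∃ c ∈ T, 1 < (c.head ∩ S).card

def SuperElementary (T : Theory) (X : Finset ℕ) : Prop :=
  Elementary T X ∧ ¬ Outbound T (atoms T) X

def posForm (T : Theory) (phi : ℕ) : Theory :=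
  T.filter (fun c => c.head.Nonempty) ∪
  (T.filter (fun c => c.head = ∅)).image (fun c => ⟨{phi}, c.body⟩) ∪
  (atoms T).image (fun a => ⟨{a}, {phi}⟩)


/-!
Since `φ` is fresh, an interpretation without `φ` is a model of `Π⁺` exactly when it is a model
of `Π`, while a model of `Π⁺` containing `φ` contains every atom of `Π`. Minimal models of `Π`
live inside `atoms Π`, so they avoid `φ` and are minimal models of `Π⁺`. If `Π` has a model, it
has one inside `atoms Π`, hence a minimal model avoiding `φ`; this refutes the first case. In the
second case a minimal model `N₀ ⊆ atoms Π` of `Π⁺` avoids `φ`, so any model of `Π⁺` containing `φ`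
strictly contains `N₀` and cannot be minimal.
-/

lemma satC_inter_of_subset {I A : Finset ℕ} {c : Clause} (hc : c.head ∪ c.body ⊆ A)
    (h : satC I c) : satC (I ∩ A) c := by
  rcases h with ⟨x, hx⟩ | hb
  · have hxA : x ∈ A := hc (Finset.mem_union_left _ (Finset.mem_of_mem_inter_left hx))
    exact Or.inl ⟨x, by rw [← Finset.inter_assoc]; exact Finset.mem_inter.2 ⟨hx, hxA⟩⟩
  · exact Or.inr fun h => hb (h.trans Finset.inter_subset_left)

lemma isModel.inter_atoms {T : Theory} {I : Finset ℕ} (h : isModel T I) :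
    isModel T (I ∩ atoms T) := fun c hc =>
  satC_inter_of_subset (Finset.subset_biUnion_of_mem (fun c => c.head ∪ c.body) hc) (h c hc)

lemma isMinModel_iff_minimal {T : Theory} {M : Finset ℕ} :
    isMinModel T M ↔ Minimal (isModel T) M :=
  minimal_iff_forall_lt.symm

lemma isModel.exists_isMinModel_subset {T : Theory} {I : Finset ℕ} (h : isModel T I) :
    ∃ M ⊆ I, isMinModel T M := by
  obtain ⟨M, hMI, hM⟩ := exists_minimal_le_of_wellFoundedLT (isModel T) I h
  exact ⟨M, hMI, isMinModel_iff_minimal.2 hM⟩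

lemma isMinModel.subset_atoms {T : Theory} {M : Finset ℕ} (h : isMinModel T M) :
    M ⊆ atoms T := by
  by_contra hM
  exact h.2 _ (Finset.inter_subset_left.ssubset_of_ne fun he => hM (Finset.inter_eq_left.1 he))
    h.1.inter_atoms

lemma isMinModel_congr {T T' : Theory} {M : Finset ℕ}
    (h : ∀ J ⊆ M, (isModel T J ↔ isModel T' J)) : isMinModel T M ↔ isMinModel T' M := by
  refine and_congr (h M subset_rfl) (forall₂_congr fun J hJ => ?_)
  rw [h J hJ.subset]

lemma mem_posForm {T : Theory} {phi : ℕ} {c : Clause} :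
    c ∈ posForm T phi ↔
      (c ∈ T ∧ c.head.Nonempty) ∨
      (∃ d ∈ T, d.head = ∅ ∧ c = ⟨{phi}, d.body⟩) ∨
      (∃ a ∈ atoms T, c = ⟨{a}, {phi}⟩) := by
  simp only [posForm, Finset.mem_union, Finset.mem_filter, Finset.mem_image, or_assoc]
  exact or_congr_right (or_congr
    (exists_congr fun _ => and_assoc.trans (and_congr_right' (and_congr_right' eq_comm)))
    (exists_congr fun _ => and_congr_right' eq_comm))

lemma isModel_posForm_iff {T : Theory} {phi : ℕ} {I : Finset ℕ} (hI : phi ∉ I) :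
    isModel (posForm T phi) I ↔ isModel T I := by
  have hphi : ¬ ({phi} ∩ I).Nonempty := by simp [Finset.singleton_inter_of_notMem hI]
  constructor
  · intro h c hc
    by_cases hne : c.head.Nonempty
    · exact h c (mem_posForm.2 (Or.inl ⟨hc, hne⟩))
    · have hconstr := Finset.not_nonempty_iff_eq_empty.1 hne
      have hphiClause := h _ (mem_posForm.2 (Or.inr (Or.inl ⟨c, hc, hconstr, rfl⟩)))
      exact Or.inr (hphiClause.resolve_left hphi)
  · intro h c hc
    rcases mem_posForm.1 hc with ⟨hc, -⟩ | ⟨d, hd, hdh, rfl⟩ | ⟨a, -, rfl⟩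
    · exact h c hc
    · refine Or.inr ((h d hd).resolve_left ?_)
      simp [hdh]
    · exact Or.inr fun hsub => hI (Finset.singleton_subset_iff.1 hsub)

lemma isMinModel_posForm_iff {T : Theory} {phi : ℕ} {M : Finset ℕ} (hM : phi ∉ M) :
    isMinModel (posForm T phi) M ↔ isMinModel T M :=
  isMinModel_congr fun _ hJ => isModel_posForm_iff fun h => hM (hJ h)

lemma atoms_subset_of_isModel_posForm {T : Theory} {phi : ℕ} {N : Finset ℕ}
    (hN : isModel (posForm T phi) N) (hphiN : phi ∈ N) : atoms T ⊆ N := by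
  intro a ha
  rcases hN _ (mem_posForm.2 (Or.inr (Or.inr ⟨a, ha, rfl⟩))) with ⟨x, hx⟩ | hb
  · simp only [Finset.mem_inter, Finset.mem_singleton] at hx
    exact hx.1 ▸ hx.2
  · exact absurd (Finset.singleton_subset_iff.2 hphiN) hb

lemma phi_notMem_of_isMinModel_posForm {T : Theory} {phi : ℕ} {N₀ M : Finset ℕ}
    (hN₀ : isMinModel (posForm T phi) N₀) (hphiN₀ : phi ∉ N₀)
    (hM : isMinModel (posForm T phi) M) : phi ∉ M := by
  intro hphiM
  have hN₀M : N₀ ⊆ M :=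
    ((isMinModel_posForm_iff hphiN₀).1 hN₀).subset_atoms.trans
      (atoms_subset_of_isModel_posForm hM.1 hphiM)
  exact hM.2 N₀ (hN₀M.ssubset_of_ne (by rintro rfl; exact hphiN₀ hphiM)) hN₀.1

theorem stmt17 (T : Theory) (phi : ℕ) (hphi : phi ∉ atoms T) :
    ((∀ N : Finset ℕ, isMinModel (posForm T phi) N → phi ∈ N) →
      ∀ M : Finset ℕ, ¬ isModel T M) ∧
    ((¬ ∀ N : Finset ℕ, isMinModel (posForm T phi) N → phi ∈ N) →
      ∀ M : Finset ℕ, (isMinModel T M ↔ isMinModel (posForm T phi) M)) := by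
  refine ⟨fun hall M hM => ?_, fun hex M => ?_⟩
  · obtain ⟨N, hNM, hN⟩ := hM.inter_atoms.exists_isMinModel_subset
    have hphiN : phi ∉ N := fun h => hphi (Finset.mem_inter.1 (hNM h)).2
    exact hphiN (hall N ((isMinModel_posForm_iff hphiN).2 hN))
  · push Not at hex
    obtain ⟨N₀, hN₀, hphiN₀⟩ := hex
    by_cases hphiM : phi ∈ M
    · exact iff_of_false (fun h => hphi (h.subset_atoms hphiM))
        (fun h => phi_notMem_of_isMinModel_posForm hN₀ hphiN₀ h hphiM)
    · exact (isMinModel_posForm_iff hphiM).symm
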